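/- arXiv:1712.03385 — 2 statements merged into one kernel-verified Lean document; each statement's English description precedes it below -/
import Mathlib

section
/- Let l, n be natural numbers with n ≤ l, let w ∈ ℝ^l, and let S be a set of indices with |S| = n such that |w_j| ≤ |w_i| for every i ∈ S and every j ∉ S. Define ŵ ∈ ℝ^l by ŵ_i = w_i for i ∈ S and ŵ_i = 0 for i ∉ S. Then ‖ŵ‖₀ ≤ n, and for every v ∈ ℝ^l with ‖v‖₀ ≤ n one has Σ_{i=1}^l (w_i − ŵ_i)² ≤ Σ_{i=1}^l (w_i − v_i)². In other words, the vector keeping the n largest-magnitude components of w and zeroing out the others is a projection of w onto the set G = {v ∈ ℝ^l : ‖v‖₀ ≤ n} with respect to the Euclidean norm. -/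
open scoped Classical

/-- Keeping the `n` largest-magnitude components of `w` and zeroing out the
others yields a projection of `w` onto `G = {v : ‖v‖₀ ≤ n}` in the
Euclidean norm. -/
theorem hard_thresholding_is_projection (l n : ℕ) (hnl : n ≤ l)
    (w : Fin l → ℝ) (S : Finset (Fin l)) (hS : S.card = n)
    (hmag : ∀ i ∈ S, ∀ j ∉ S, |w j| ≤ |w i|)
    (what : Fin l → ℝ) (hwhat : ∀ i, what i = if i ∈ S then w i else 0) :
    (Finset.univ.filter fun i => what i ≠ 0).card ≤ n ∧
      ∀ v : Fin l → ℝ, (Finset.univ.filter fun i => v i ≠ 0).card ≤ n →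
        ∑ i, (w i - what i) ^ 2 ≤ ∑ i, (w i - v i) ^ 2 := by
  have hsq : ∀ i ∈ S, ∀ j ∉ S, (w j) ^ 2 ≤ (w i) ^ 2 := by
    intro i hi j hj
    have h := hmag i hi j hj
    calc (w j) ^ 2 = |w j| ^ 2 := (sq_abs _).symm
      _ ≤ |w i| ^ 2 := by exact pow_le_pow_left₀ (abs_nonneg _) h 2
      _ = (w i) ^ 2 := sq_abs _
  constructor
  · have hsub : (Finset.univ.filter fun i => what i ≠ 0) ⊆ S := by
      intro i hi
      simp only [Finset.mem_filter, hwhat] at hi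
      by_contra h
      simp [h] at hi
    exact hS ▸ Finset.card_le_card hsub
  · intro v hv
    set T := Finset.univ.filter (fun i => v i ≠ 0) with hT
    have hvT : ∀ i ∉ T, v i = 0 := by
      intro i hi
      by_contra h
      exact hi (by simp [hT, h])
    have hcard : (T \ S).card ≤ (S \ T).card := by
      have h1 := Finset.card_sdiff_add_card_inter T S
      have h2 := Finset.card_sdiff_add_card_inter S T
      rw [Finset.inter_comm] at h2
      omega
    have key : ∑ i ∈ T \ S, (w i) ^ 2 ≤ ∑ i ∈ S \ T, (w i) ^ 2 := by
      rcases (T \ S).eq_empty_or_nonempty with he | hne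
      · simp only [he, Finset.sum_empty]
        exact Finset.sum_nonneg fun i _ => sq_nonneg _
      · have hne' : (S \ T).Nonempty := by
          rw [← Finset.card_pos] at hne ⊢
          omega
        set c := (S \ T).inf' hne' (fun i => (w i) ^ 2) with hc
        have hc0 : 0 ≤ c := Finset.le_inf' hne' _ fun i _ => sq_nonneg _
        have h1 : ∑ i ∈ T \ S, (w i) ^ 2 ≤ (T \ S).card • c := by
          apply Finset.sum_le_card_nsmul
          intro j hj
          apply Finset.le_inf' hne'
          intro i hi
          exact hsq i (Finset.mem_sdiff.mp hi).1 j (Finset.mem_sdiff.mp hj).2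
        have h2 : (S \ T).card • c ≤ ∑ i ∈ S \ T, (w i) ^ 2 :=
          Finset.card_nsmul_le_sum _ _ _ fun i hi => Finset.inf'_le _ hi
        have h3 : (T \ S).card • c ≤ (S \ T).card • c := by
          simp only [nsmul_eq_mul]
          exact mul_le_mul_of_nonneg_right (by exact_mod_cast hcard) hc0
        linarith
    have e1 : ∑ i, (w i - what i) ^ 2 = ∑ i ∈ Sᶜ, (w i) ^ 2 := by
      rw [← Finset.sum_add_sum_compl S]
      have h0 : ∑ i ∈ S, (w i - what i) ^ 2 = 0 :=
        Finset.sum_eq_zero fun i hi => by simp [hwhat, hi]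
      rw [h0, zero_add]
      exact Finset.sum_congr rfl fun i hi => by
        simp [hwhat, Finset.mem_compl.mp hi]
    have e2 : ∑ i ∈ Tᶜ, (w i) ^ 2 ≤ ∑ i, (w i - v i) ^ 2 := by
      rw [← Finset.sum_add_sum_compl T]
      have h0 : ∑ i ∈ Tᶜ, (w i) ^ 2 = ∑ i ∈ Tᶜ, (w i - v i) ^ 2 :=
        Finset.sum_congr rfl fun i hi => by
          rw [hvT i (Finset.mem_compl.mp hi), sub_zero]
      rw [h0]
      exact le_add_of_nonneg_left (Finset.sum_nonneg fun i _ => sq_nonneg _)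
    have emid : ∑ i ∈ Sᶜ, (w i) ^ 2 ≤ ∑ i ∈ Tᶜ, (w i) ^ 2 := by
      have d1 : Sᶜ \ Tᶜ = T \ S := by ext i; simp [and_comm]
      have d2 : Tᶜ \ Sᶜ = S \ T := by ext i; simp [and_comm]
      have s1 := Finset.sum_inter_add_sum_sdiff Sᶜ Tᶜ (fun i => (w i) ^ 2)
      have s2 := Finset.sum_inter_add_sum_sdiff Tᶜ Sᶜ (fun i => (w i) ^ 2)
      rw [d1] at s1
      rw [d2] at s2
      rw [Finset.inter_comm] at s2
      linarith
    linarith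
end

section
/- Let m, d be natural numbers, E > 0, cᵢ > 0 and xᵢ > 0 for i = 1, …, m, bᵢ ∈ ℝ^d, and let p ∈ ℝ^d lie in the linear span of {b₁, …, b_m}. Set K = Σ_{i=1}^m (E/cᵢ) xᵢ bᵢ bᵢᵀ. Then there exists q* ∈ ℝ^m with Σ_{i=1}^m q*ᵢ bᵢ = p such that: (i) for every u ∈ ℝ^d, 2⟨p, u⟩ − ⟨u, K u⟩ ≤ Σ_{i=1}^m (cᵢ/(E xᵢ)) (q*ᵢ)²; (ii) for every q ∈ ℝ^m with Σ_{i=1}^m qᵢ bᵢ = p, Σ_{i=1}^m (cᵢ/(E xᵢ)) (q*ᵢ)² ≤ Σ_{i=1}^m (cᵢ/(E xᵢ)) qᵢ²; and (iii) there exists u* ∈ ℝ^d with 2⟨p, u*⟩ − ⟨u*, K u*⟩ = Σ_{i=1}^m (cᵢ/(E xᵢ)) (q*ᵢ)². In particular, the compliance sup{2pᵀu − uᵀKu : u ∈ ℝ^d} equals the minimum of Σ_{i=1}^m (cᵢ/(E xᵢ)) qᵢ² over all axial-force vectors q satisfying the equilibrium condition Σ qᵢ bᵢ = p, and both optimal values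 are attained. -/
open Matrix

/-!
Let `B` be the matrix with rows `bᵢ` and `wᵢ = E xᵢ / cᵢ` the member stiffnesses, so that
`K = Bᵀ diag(w) B`. Since every `wᵢ > 0`, `K` and `B` have the same kernel, hence `K` and `Bᵀ`
have the same range `span {bᵢ}`: the equation `K u* = p` is solvable and `q* = diag(w) B u*`
is in equilibrium. Pointwise `2 qᵢ yᵢ - wᵢ yᵢ² ≤ qᵢ² / wᵢ`, with equality for `qᵢ = wᵢ yᵢ`;
summing with `y = B u` gives weak duality `2 pᵀu - uᵀKu ≤ Σ qᵢ² / wᵢ` for every equilibrium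
force `q` and every displacement `u`, with equality at `(q*, u*)`.
-/

theorem two_mul_mul_sub_mul_sq_le_inv_mul_sq {R : Type*} [Field R] [LinearOrder R]
    [IsStrictOrderedRing R] {w : R} (hw : 0 < w) (q y : R) :
    2 * q * y - w * y ^ 2 ≤ w⁻¹ * q ^ 2 := by
  have hsq : w⁻¹ * q ^ 2 - (2 * q * y - w * y ^ 2) = w⁻¹ * (q - w * y) ^ 2 := by
    field_simp
    ring
  linarith [mul_nonneg (inv_nonneg.2 hw.le) (sq_nonneg (q - w * y))]

namespace Matrix

variable {ι n R : Type*} [Fintype ι] [DecidableEq ι]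

theorem sum_smul_vecMulVec_self_eq_transpose_mul_diagonal_mul [CommSemiring R]
    (B : Matrix ι n R) (w : ι → R) :
    ∑ i, w i • vecMulVec (B i) (B i) = Bᵀ * diagonal w * B := by
  ext j k
  rw [Matrix.sum_apply, mul_apply]
  simp only [Matrix.smul_apply, vecMulVec_apply, smul_eq_mul, mul_diagonal, transpose_apply]
  exact Finset.sum_congr rfl fun i _ => by ring

variable [Fintype n]

theorem dotProduct_transpose_mul_diagonal_mul_mulVec [CommSemiring R] (B : Matrix ι n R)
    (w : ι → R) (u v : n → R) :
    u ⬝ᵥ (Bᵀ * diagonal w * B) *ᵥ v = ∑ i, w i * (B *ᵥ u) i * (B *ᵥ v) i := by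
  rw [← mulVec_mulVec, ← mulVec_mulVec, dotProduct_mulVec, vecMul_transpose, dotProduct]
  simp only [mulVec_diagonal]
  exact Finset.sum_congr rfl fun i _ => by ring

theorem two_dotProduct_sub_eq_sum_inv_mul_sq [Field R] (B : Matrix ι n R) {w : ι → R}
    (hw : ∀ i, w i ≠ 0) {p u : n → R} (hu : (Bᵀ * diagonal w * B) *ᵥ u = p) :
    2 * (p ⬝ᵥ u) - u ⬝ᵥ (Bᵀ * diagonal w * B) *ᵥ u =
      ∑ i, (w i)⁻¹ * ((diagonal w * B) *ᵥ u) i ^ 2 := by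
  rw [← hu, dotProduct_comm, dotProduct_transpose_mul_diagonal_mul_mulVec, Finset.mul_sum,
    ← Finset.sum_sub_distrib]
  refine Finset.sum_congr rfl fun i _ => ?_
  rw [← mulVec_mulVec, mulVec_diagonal]
  field_simp [hw i]
  ring

variable [Field R] [LinearOrder R] [IsStrictOrderedRing R]

theorem two_dotProduct_sub_le_sum_inv_mul_sq (B : Matrix ι n R) {w : ι → R}
    (hw : ∀ i, 0 < w i) {p : n → R} {q : ι → R} (hq : Bᵀ *ᵥ q = p) (u : n → R) :
    2 * (p ⬝ᵥ u) - u ⬝ᵥ (Bᵀ * diagonal w * B) *ᵥ u ≤ ∑ i, (w i)⁻¹ * q i ^ 2 := by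
  have hpu : p ⬝ᵥ u = ∑ i, q i * (B *ᵥ u) i := by
    rw [← hq, dotProduct_comm, dotProduct_mulVec, vecMul_transpose, dotProduct_comm, dotProduct]
  rw [hpu, dotProduct_transpose_mul_diagonal_mul_mulVec, Finset.mul_sum, ← Finset.sum_sub_distrib]
  refine Finset.sum_le_sum fun i _ => ?_
  linarith [two_mul_mul_sub_mul_sq_le_inv_mul_sq (hw i) (q i) ((B *ᵥ u) i)]

theorem ker_mulVecLin_transpose_mul_diagonal_mul (B : Matrix ι n R) {w : ι → R}
    (hw : ∀ i, 0 < w i) :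
    LinearMap.ker (Bᵀ * diagonal w * B).mulVecLin = LinearMap.ker B.mulVecLin := by
  ext u
  simp only [LinearMap.mem_ker, mulVecLin_apply]
  refine ⟨fun hu => ?_, fun hu => by rw [← mulVec_mulVec, hu, mulVec_zero]⟩
  have hsum : ∑ i, w i * ((B *ᵥ u) i * (B *ᵥ u) i) = 0 := by
    simp_rw [← mul_assoc]
    rw [← dotProduct_transpose_mul_diagonal_mul_mulVec, hu, dotProduct_zero]
  have hterm := (Finset.sum_eq_zero_iff_of_nonneg fun i _ =>
    mul_nonneg (hw i).le (mul_self_nonneg ((B *ᵥ u) i))).1 hsum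
  funext i
  simpa [(hw i).ne'] using hterm i (Finset.mem_univ i)

theorem range_mulVecLin_transpose_mul_diagonal_mul (B : Matrix ι n R) {w : ι → R}
    (hw : ∀ i, 0 < w i) :
    LinearMap.range (Bᵀ * diagonal w * B).mulVecLin = Submodule.span R (Set.range B.row) := by
  rw [← range_vecMulLinear]
  have hle : LinearMap.range (Bᵀ * diagonal w * B).mulVecLin ≤ LinearMap.range B.vecMulLinear := by
    rintro _ ⟨u, rfl⟩
    exact ⟨diagonal w *ᵥ B *ᵥ u, by simp [Matrix.mul_assoc]⟩
  refine Submodule.eq_of_le_of_finrank_eq hle ?_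
  have hK := LinearMap.finrank_range_add_finrank_ker (Bᵀ * diagonal w * B).mulVecLin
  have hB := LinearMap.finrank_range_add_finrank_ker B.mulVecLin
  rw [ker_mulVecLin_transpose_mul_diagonal_mul B hw] at hK
  have hrank : Module.finrank R (LinearMap.range B.vecMulLinear) = B.rank := by
    rw [show B.vecMulLinear = Bᵀ.mulVecLin from LinearMap.ext fun v => (mulVec_transpose B v).symm,
      ← rank, rank_transpose]
  rw [hrank, rank]
  omega

end Matrix

/-- Equivalence of the compliance and its complementary-energy (SOCP)
reformulation: there is an equilibrium force vector `q*` with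
`Σ qᵢ* bᵢ = p` such that the complementary energy at `q*` upper-bounds
`2⟨p,u⟩ − ⟨u,Ku⟩` for all `u`, is minimal among all equilibrium force vectors,
and is attained by some displacement `u*`. -/
theorem compliance_eq_min_complementary_energy (m d : ℕ)
    (E : ℝ) (hE : 0 < E) (c x : Fin m → ℝ)
    (hc : ∀ i, 0 < c i) (hx : ∀ i, 0 < x i)
    (b : Fin m → Fin d → ℝ) (p : Fin d → ℝ)
    (hp : p ∈ Submodule.span ℝ (Set.range b))
    (K : Matrix (Fin d) (Fin d) ℝ)
    (hK : K = ∑ i, (E / c i * x i) • Matrix.vecMulVec (b i) (b i)) :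
    ∃ qstar : Fin m → ℝ,
      (∑ i, qstar i • b i) = p ∧
      (∀ u : Fin d → ℝ,
        2 * (p ⬝ᵥ u) - u ⬝ᵥ K.mulVec u
          ≤ ∑ i, c i / (E * x i) * qstar i ^ 2) ∧
      (∀ q : Fin m → ℝ, (∑ i, q i • b i) = p →
        ∑ i, c i / (E * x i) * qstar i ^ 2
          ≤ ∑ i, c i / (E * x i) * q i ^ 2) ∧
      (∃ ustar : Fin d → ℝ,
        2 * (p ⬝ᵥ ustar) - ustar ⬝ᵥ K.mulVec ustar
          = ∑ i, c i / (E * x i) * qstar i ^ 2) := by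
  set w : Fin m → ℝ := fun i => E / c i * x i
  have hw : ∀ i, 0 < w i := fun i => mul_pos (div_pos hE (hc i)) (hx i)
  set B : Matrix (Fin m) (Fin d) ℝ := Matrix.of b
  have hKB : K = Bᵀ * diagonal w * B :=
    hK.trans (sum_smul_vecMulVec_self_eq_transpose_mul_diagonal_mul B w)
  have hforce : ∀ q : Fin m → ℝ, ∑ i, q i • b i = Bᵀ *ᵥ q := fun q => by
    rw [mulVec_transpose, vecMul_eq_sum]
    rfl
  have hcoef : ∀ i, c i / (E * x i) = (w i)⁻¹ := fun i => by
    simp only [w]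
    field_simp
  obtain ⟨ustar, hustar : (Bᵀ * diagonal w * B) *ᵥ ustar = p⟩ :
      p ∈ LinearMap.range (Bᵀ * diagonal w * B).mulVecLin := by
    rwa [range_mulVecLin_transpose_mul_diagonal_mul B hw]
  have hequil : Bᵀ *ᵥ ((diagonal w * B) *ᵥ ustar) = p := by
    rw [mulVec_mulVec, ← Matrix.mul_assoc, hustar]
  have hequality := two_dotProduct_sub_eq_sum_inv_mul_sq B (fun i => (hw i).ne') hustar
  simp_rw [hcoef, hforce, hKB]
  refine ⟨(diagonal w * B) *ᵥ ustar, hequil, two_dotProduct_sub_le_sum_inv_mul_sq B hw hequil,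
    fun q hq => ?_, ustar, hequality⟩
  rw [← hequality]
  exact two_dotProduct_sub_le_sum_inv_mul_sq B hw hq ustar
end
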